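/- arXiv:1607.01634 — 3 statements merged into one kernel-verified Lean document; each statement's English description precedes it below -/
import Mathlib

section
/- Let U be a finite universe, R an equivalence relation on U, X ⊆ U and β₁, β₂ ∈ [0, 1/2) with β₁ ≤ β₂. Then the accuracy of approximation is monotone increasing in β: αX(β₁) ≤ αX(β₂), where αX(β) = |X̲(β)| / |X̄(β)| (with the convention that the quotient is 0 when the denominator is 0). -/
/-- The equivalence class of `y` under the equivalence relation `R`, as a finset. -/
def eqClass {U : Type*} [Fintype U] [DecidableEq U] (R : Setoid U)
    [DecidableRel R.r] (y : U) : Finset U :=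
  Finset.univ.filter (fun x => R.r x y)

/-- Relative degree of misclassification `d(A,B) = 1 - |A ∩ B| / |A|`. -/
def misclass {U : Type*} [DecidableEq U] (A B : Finset U) : ℚ :=
  1 - ((A ∩ B).card : ℚ) / (A.card : ℚ)

/-- β-lower approximation: union of classes `R[y]` with `d(R[y],X) ≤ β`. -/
def lowerApprox {U : Type*} [Fintype U] [DecidableEq U] (R : Setoid U)
    [DecidableRel R.r] (X : Finset U) (β : ℚ) : Finset U :=
  (Finset.univ.filter (fun y => misclass (eqClass R y) X ≤ β)).biUnion (eqClass R)

/-- β-upper approximation: union of classes `R[y]` with `R[y] ∩ X ≠ ∅` and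
`d(R[y],X) ≤ 1 - β`. -/
def upperApprox {U : Type*} [Fintype U] [DecidableEq U] (R : Setoid U)
    [DecidableRel R.r] (X : Finset U) (β : ℚ) : Finset U :=
  (Finset.univ.filter (fun y =>
    (eqClass R y ∩ X).Nonempty ∧ misclass (eqClass R y) X ≤ 1 - β)).biUnion (eqClass R)

/-- Negative region: union of classes `R[y]` with `d(R[y],X) > 1 - β`. -/
def negRegion {U : Type*} [Fintype U] [DecidableEq U] (R : Setoid U)
    [DecidableRel R.r] (X : Finset U) (β : ℚ) : Finset U :=
  (Finset.univ.filter (fun y => 1 - β < misclass (eqClass R y) X)).biUnion (eqClass R)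

/-- Boundary region: `BNX(β) = X̄(β) \ X̲(β)`. -/
def bndRegion {U : Type*} [Fintype U] [DecidableEq U] (R : Setoid U)
    [DecidableRel R.r] (X : Finset U) (β : ℚ) : Finset U :=
  upperApprox R X β \ lowerApprox R X β

/-- Accuracy of approximation `αX(β) = |X̲(β)| / |X̄(β)|` (with `q/0 = 0` in `ℚ`). -/
def accuracy {U : Type*} [Fintype U] [DecidableEq U] (R : Setoid U)
    [DecidableRel R.r] (X : Finset U) (β : ℚ) : ℚ :=
  ((lowerApprox R X β).card : ℚ) / ((upperApprox R X β).card : ℚ)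

/-! Larger β enlarges the lower approximation and shrinks the upper one, while for β ≤ 1/2 the lower
approximation lies inside the upper one; so the numerator of αX grows and the denominator
shrinks, and the only degenerate case, an empty upper approximation at β₂, forces an empty
lower approximation at β₁. -/

lemma inter_nonempty_of_misclass_lt_one {U : Type*} [DecidableEq U] {A B : Finset U}
    (h : misclass A B < 1) : (A ∩ B).Nonempty := by
  by_contra hAB
  rw [Finset.not_nonempty_iff_eq_empty] at hAB
  simp [misclass, hAB] at h

section

variable {U : Type*} [Fintype U] [DecidableEq U] (R : Setoid U) [DecidableRel R.r] (X : Finset U)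

lemma lowerApprox_mono : Monotone (lowerApprox R X) := fun _ _ h =>
  Finset.biUnion_subset_biUnion_of_subset_left _ <|
    Finset.monotone_filter_right _ fun _ _ hy => hy.trans h

lemma upperApprox_antitone : Antitone (upperApprox R X) := fun _ _ h =>
  Finset.biUnion_subset_biUnion_of_subset_left _ <|
    Finset.monotone_filter_right _ fun _ _ hy => ⟨hy.1, hy.2.trans (by linarith)⟩

lemma lowerApprox_subset_upperApprox {β : ℚ} (hβ : β ≤ 1 / 2) :
    lowerApprox R X β ⊆ upperApprox R X β :=
  Finset.biUnion_subset_biUnion_of_subset_left _ <|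
    Finset.monotone_filter_right _ fun _ _ hy =>
      ⟨inter_nonempty_of_misclass_lt_one (by linarith), by linarith⟩

end

lemma natCast_div_le_natCast_div {a b c d : ℕ} (hac : a ≤ c) (hdb : d ≤ b) (hcd : c ≤ d) :
    (a / b : ℚ) ≤ c / d := by
  rcases d.eq_zero_or_pos with rfl | hd
  · obtain rfl : a = 0 := by omega
    simp
  · exact div_le_div₀ (by positivity) (by exact_mod_cast hac) (by exact_mod_cast hd)
      (by exact_mod_cast hdb)

theorem accuracy_mono_general {U : Type*} [Fintype U] [DecidableEq U] (R : Setoid U)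
    [DecidableRel R.r] (X : Finset U) (β₁ β₂ : ℚ)
    (hβ₂1 : β₂ < 1/2) (h : β₁ ≤ β₂) :
    accuracy R X β₁ ≤ accuracy R X β₂ :=
  natCast_div_le_natCast_div (Finset.card_le_card (lowerApprox_mono R X h))
    (Finset.card_le_card (upperApprox_antitone R X h))
    (Finset.card_le_card (lowerApprox_subset_upperApprox R X hβ₂1.le))

theorem accuracy_mono {U : Type*} [Fintype U] [DecidableEq U] (R : Setoid U)
    [DecidableRel R.r] (X : Finset U) (β₁ β₂ : ℚ) (hβ₁0 : 0 ≤ β₁) (hβ₁1 : β₁ < 1/2)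
    (hβ₂0 : 0 ≤ β₂) (hβ₂1 : β₂ < 1/2) (h : β₁ ≤ β₂) :
    accuracy R X β₁ ≤ accuracy R X β₂ :=
  accuracy_mono_general R X β₁ β₂ hβ₂1 h
end

section
/- Let U be a finite universe, R an equivalence relation on U and X ⊆ U. Then the family {BNX(β) : β ∈ [0, 1/2)} of boundary regions is totally ordered by inclusion, and BNX(0) is its greatest element; moreover BNX(0) equals the classical Pawlak boundary X̄ \ X̲, where X̲ = ⋃{R[y] : R[y] ⊆ X} and X̄ = ⋃{R[y] : R[y] ∩ X ≠ ∅}. -/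
/-- Classical Pawlak lower approximation: union of classes `R[y]` with `R[y] ⊆ X`. -/
def pawlakLower {U : Type*} [Fintype U] [DecidableEq U] (R : Setoid U)
    [DecidableRel R.r] (X : Finset U) : Finset U :=
  (Finset.univ.filter (fun y => eqClass R y ⊆ X)).biUnion (eqClass R)

/-- Classical Pawlak upper approximation: union of classes `R[y]` with `R[y] ∩ X ≠ ∅`. -/
def pawlakUpper {U : Type*} [Fintype U] [DecidableEq U] (R : Setoid U)
    [DecidableRel R.r] (X : Finset U) : Finset U :=
  (Finset.univ.filter (fun y => (eqClass R y ∩ X).Nonempty)).biUnion (eqClass R)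

theorem bndRegion_totally_ordered_greatest {U : Type*} [Fintype U] [DecidableEq U] (R : Setoid U)
    [DecidableRel R.r] (X : Finset U) :
    (∀ β₁ β₂ : ℚ, 0 ≤ β₁ → β₁ < 1/2 → 0 ≤ β₂ → β₂ < 1/2 →
      bndRegion R X β₁ ⊆ bndRegion R X β₂ ∨
      bndRegion R X β₂ ⊆ bndRegion R X β₁) ∧
    (∀ β : ℚ, 0 ≤ β → β < 1/2 → bndRegion R X β ⊆ bndRegion R X 0) ∧
    bndRegion R X 0 = pawlakUpper R X \ pawlakLower R X := by
  have hne : ∀ y : U, (eqClass R y).Nonempty := fun y => ⟨y, by simp only [eqClass, Finset.mem_filter, Finset.mem_univ, true_and]; exact R.refl y⟩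
  have hcard : ∀ y : U, 0 < ((eqClass R y).card : ℚ) := by
    intro y; exact_mod_cast Finset.card_pos.mpr (hne y)
  have hmono : ∀ β₁ β₂ : ℚ, β₁ ≤ β₂ → bndRegion R X β₂ ⊆ bndRegion R X β₁ := by
    intro β₁ β₂ h x hx
    simp only [bndRegion, Finset.mem_sdiff, upperApprox, lowerApprox, Finset.mem_biUnion,
      Finset.mem_filter, Finset.mem_univ, true_and, not_exists, not_and] at hx ⊢
    obtain ⟨⟨y, ⟨hy1, hy2⟩, hxy⟩, hl⟩ := hx
    exact ⟨⟨y, ⟨hy1, hy2.trans (by linarith)⟩, hxy⟩,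
      fun z hz => hl z (hz.trans h)⟩
  refine ⟨fun β₁ β₂ h1 _ h2 _ => ?_, fun β h0 _ => hmono 0 β h0, ?_⟩
  · rcases le_total β₁ β₂ with h | h
    · exact Or.inr (hmono β₁ β₂ h)
    · exact Or.inl (hmono β₂ β₁ h)
  · have hlow : lowerApprox R X 0 = pawlakLower R X := by
      unfold lowerApprox pawlakLower
      congr 1
      apply Finset.filter_congr
      intro y _
      simp only [misclass, sub_nonpos, tsub_le_iff_right, zero_add]
      rw [le_div_iff₀ (hcard y)]
      constructor
      · intro h
        have h' : ((eqClass R y).card : ℚ) ≤ (((eqClass R y) ∩ X).card : ℚ) := by linarith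
        have h'' : (eqClass R y).card ≤ ((eqClass R y) ∩ X).card := by exact_mod_cast h'
        have heq := Finset.eq_of_subset_of_card_le (Finset.inter_subset_left) h''
        intro a ha
        have ha2 : a ∈ eqClass R y ∩ X := by rw [heq]; exact ha
        exact (Finset.mem_inter.mp ha2).2
      · intro h
        have : eqClass R y ∩ X = eqClass R y := Finset.inter_eq_left.mpr h
        rw [this]; linarith
    have hup : upperApprox R X 0 = pawlakUpper R X := by
      unfold upperApprox pawlakUpper
      congr 1
      apply Finset.filter_congr
      intro y _
      simp only [misclass, sub_zero, and_iff_left_iff_imp]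
      intro _
      have : (0:ℚ) ≤ ((eqClass R y ∩ X).card : ℚ) / ((eqClass R y).card : ℚ) :=
        div_nonneg (by positivity) (le_of_lt (hcard y))
      linarith
    rw [bndRegion, hlow, hup]
end

section
/- Let U be a finite universe, R an equivalence relation on U and X ⊆ U. Then the set of variable precision rough sets with variable error {X(β, γ) = (X̲(β), X̄(γ)) : β, γ ∈ [0, 1/2)} is closed under componentwise join and meet: for all β₁, γ₁, β₂, γ₂ ∈ [0, 1/2), X(β₁, γ₁) ⊔ X(β₂, γ₂) = X(max(β₁,β₂), min(γ₁,γ₂)) and X(β₁, γ₁) ⊓ X(β₂, γ₂) = X(min(β₁,β₂), max(γ₁,γ₂)). -/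
lemma eqClass_eq_of_mem {U : Type*} [Fintype U] [DecidableEq U] (R : Setoid U)
    [DecidableRel R.r] {x y : U} (h : x ∈ eqClass R y) : eqClass R y = eqClass R x := by
  simp only [eqClass, Finset.mem_filter] at h ⊢
  ext z
  simp only [Finset.mem_filter, Finset.mem_univ, true_and]
  exact ⟨fun hz => R.trans hz (R.symm h.2), fun hz => R.trans hz h.2⟩

lemma mem_eqClass_self {U : Type*} [Fintype U] [DecidableEq U] (R : Setoid U)
    [DecidableRel R.r] (x : U) : x ∈ eqClass R x := by
  simp only [eqClass, Finset.mem_filter, Finset.mem_univ, true_and]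
  exact Setoid.refl x

lemma one_sub_min (a b : ℚ) : 1 - min a b = max (1 - a) (1 - b) := by
  rcases le_total a b with h | h
  · rw [min_eq_left h, max_eq_left (by linarith)]
  · rw [min_eq_right h, max_eq_right (by linarith)]

lemma one_sub_max (a b : ℚ) : 1 - max a b = min (1 - a) (1 - b) := by
  rcases le_total a b with h | h
  · rw [max_eq_right h, min_eq_right (by linarith)]
  · rw [max_eq_left h, min_eq_left (by linarith)]

lemma mem_lowerApprox_iff {U : Type*} [Fintype U] [DecidableEq U] (R : Setoid U)
    [DecidableRel R.r] (X : Finset U) (β : ℚ) (x : U) :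
    x ∈ lowerApprox R X β ↔ misclass (eqClass R x) X ≤ β := by
  simp only [lowerApprox, Finset.mem_biUnion, Finset.mem_filter, Finset.mem_univ, true_and]
  constructor
  · rintro ⟨y, hy, hx⟩
    rwa [eqClass_eq_of_mem R hx] at hy
  · exact fun h => ⟨x, h, mem_eqClass_self R x⟩

lemma mem_upperApprox_iff {U : Type*} [Fintype U] [DecidableEq U] (R : Setoid U)
    [DecidableRel R.r] (X : Finset U) (γ : ℚ) (x : U) :
    x ∈ upperApprox R X γ ↔ (eqClass R x ∩ X).Nonempty ∧ misclass (eqClass R x) X ≤ 1 - γ := by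
  simp only [upperApprox, Finset.mem_biUnion, Finset.mem_filter, Finset.mem_univ, true_and]
  constructor
  · rintro ⟨y, hy, hx⟩
    rwa [eqClass_eq_of_mem R hx] at hy
  · exact fun h => ⟨x, h, mem_eqClass_self R x⟩

theorem vprsve_closed_join_meet {U : Type*} [Fintype U] [DecidableEq U] (R : Setoid U)
    [DecidableRel R.r] (X : Finset U) :
    ∀ β₁ γ₁ β₂ γ₂ : ℚ, 0 ≤ β₁ → β₁ < 1/2 → 0 ≤ γ₁ → γ₁ < 1/2 →
      0 ≤ β₂ → β₂ < 1/2 → 0 ≤ γ₂ → γ₂ < 1/2 →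
      ((lowerApprox R X β₁ ∪ lowerApprox R X β₂,
        upperApprox R X γ₁ ∪ upperApprox R X γ₂)
          = (lowerApprox R X (max β₁ β₂), upperApprox R X (min γ₁ γ₂)) ∧
       (lowerApprox R X β₁ ∩ lowerApprox R X β₂,
        upperApprox R X γ₁ ∩ upperApprox R X γ₂)
          = (lowerApprox R X (min β₁ β₂), upperApprox R X (max γ₁ γ₂))) := by
  intro β₁ γ₁ β₂ γ₂ _ _ _ _ _ _ _ _
  constructor <;> refine Prod.ext ?_ ?_ <;> ext x <;>
    simp only [Finset.mem_union, Finset.mem_inter, mem_lowerApprox_iff, mem_upperApprox_iff,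
      one_sub_min, one_sub_max,
      le_max_iff, le_min_iff] <;> tauto
end
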